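/- Loosening: in the strict λ-calculus, (1) if Γ; (Ω, x:C); Δ ⊢ M : A, then (Γ, x:C); Ω; Δ ⊢ M : A, and (2) if Γ; Ω; (Δ, x:C) ⊢ M : A, then (Γ, x:C); Ω; Δ ⊢ M : A. -/

import Mathlib

/- A strict λ-calculus with strict (1), irrelevant (0) and unrestricted (u)
   function spaces, in locally nameless representation.  Contexts are finite
   sets of (variable name, type) declarations, split into three zones
   Γ (unrestricted); Ω (irrelevant); Δ (strict). -/

/-- Labels `k ::= 1 | 0 | u`. -/
inductive Lab : Type
  | one
  | zero
  | un
deriving DecidableEq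

/-- Types `A ::= a | A₁ →ᵏ A₂` over atomic types `a` (names in ℕ). -/
inductive Ty : Type
  | atom : ℕ → Ty
  | arr : Ty → Lab → Ty → Ty
deriving DecidableEq

/-- Terms `M ::= c | x | λxᵏ:A.M | M Nᵏ` (locally nameless: bound variables
    are de Bruijn indices, free variables/parameters are names). -/
inductive Tm : Type
  | const : ℕ → Tm
  | bvar : ℕ → Tm
  | fvar : ℕ → Tm
  | lam : Lab → Ty → Tm → Tm
  | app : Tm → Lab → Tm → Tm
deriving DecidableEq

/-- Opening: replace the bound variable `k` by the term `u`. -/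
def Tm.openRec (k : ℕ) (u : Tm) : Tm → Tm
  | .const c => .const c
  | .bvar i => if i = k then u else .bvar i
  | .fvar x => .fvar x
  | .lam l A M => .lam l A (Tm.openRec (k+1) u M)
  | .app M l N => .app (Tm.openRec k u M) l (Tm.openRec k u N)

/-- `M.open0 N` is the body `M` of an abstraction with its bound variable
    replaced by `N`; since free variables are named, this is
    capture-avoiding substitution of the bound variable by construction. -/
def Tm.open0 (M u : Tm) : Tm := Tm.openRec 0 u M

/-- A context zone: a finite set of declarations `x : A`. -/
abbrev Ctx : Type := Finset (ℕ × Ty)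

/-- The variables declared in a context. -/
def Ctx.names (Γ : Ctx) : Finset ℕ := Γ.image Prod.fst

/-- The typing judgment `Γ; Ω; Δ ⊢ M : A` of the strict λ-calculus,
    over a fixed signature `Sg` assigning types to constants
    (a function, so each constant is declared at most once). -/
inductive Typ (Sg : ℕ → Option Ty) : Ctx → Ctx → Ctx → Tm → Ty → Prop
  | con {Γ Ω : Ctx} {c : ℕ} {A : Ty} :
      Sg c = some A → Typ Sg Γ Ω ∅ (.const c) A
  | idu {Γ Ω : Ctx} {x : ℕ} {A : Ty} :
      (x, A) ∈ Γ → Typ Sg Γ Ω ∅ (.fvar x) A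
  | id1 {Γ Ω : Ctx} {x : ℕ} {A : Ty} :
      Typ Sg Γ Ω {(x, A)} (.fvar x) A
  | lamu {Γ Ω Δ : Ctx} {x : ℕ} {A B : Ty} {M : Tm} :
      x ∉ Ctx.names (Γ ∪ Ω ∪ Δ) →
      Typ Sg (insert (x, A) Γ) Ω Δ (Tm.open0 M (.fvar x)) B →
      Typ Sg Γ Ω Δ (.lam .un A M) (.arr A .un B)
  | lam0 {Γ Ω Δ : Ctx} {x : ℕ} {A B : Ty} {M : Tm} :
      x ∉ Ctx.names (Γ ∪ Ω ∪ Δ) →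
      Typ Sg Γ (insert (x, A) Ω) Δ (Tm.open0 M (.fvar x)) B →
      Typ Sg Γ Ω Δ (.lam .zero A M) (.arr A .zero B)
  | lam1 {Γ Ω Δ : Ctx} {x : ℕ} {A B : Ty} {M : Tm} :
      x ∉ Ctx.names (Γ ∪ Ω ∪ Δ) →
      Typ Sg Γ Ω (insert (x, A) Δ) (Tm.open0 M (.fvar x)) B →
      Typ Sg Γ Ω Δ (.lam .one A M) (.arr A .one B)
  | appu {Γ Ω Δ : Ctx} {M N : Tm} {A B : Ty} :
      Typ Sg Γ Ω Δ M (.arr A .un B) →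
      Typ Sg (Γ ∪ Δ) Ω ∅ N A →
      Typ Sg Γ Ω Δ (.app M .un N) B
  | app0 {Γ Ω Δ : Ctx} {M N : Tm} {A B : Ty} :
      Typ Sg Γ Ω Δ M (.arr A .zero B) →
      Typ Sg (Γ ∪ Ω ∪ Δ) ∅ ∅ N A →
      Typ Sg Γ Ω Δ (.app M .zero N) B
  | app1 {Γ Ω ΔM ΔN : Ctx} {M N : Tm} {A B : Ty} :
      Disjoint ΔM ΔN →
      Typ Sg (Γ ∪ ΔN) Ω ΔM M (.arr A .one B) →
      Typ Sg (Γ ∪ ΔM) Ω ΔN N A →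
      Typ Sg Γ Ω (ΔM ∪ ΔN) (.app M .one N) B

/-! Loosening is proved by induction on derivations in a more general form: the declarations
may be redistributed among the three zones provided the overall set of declarations is
unchanged (so the freshness side conditions of the λ-rules survive), no strict declaration is
created, and every unrestricted or strict declaration stays unrestricted or strict. In the
`→¹E` case the new strict zone is split along the split of the old one. -/

theorem Typ.loosen {Sg : ℕ → Option Ty} {Γ Ω Δ : Ctx} {M : Tm} {A : Ty}
    (h : Typ Sg Γ Ω Δ M A) {Γ' Ω' Δ' : Ctx} (hstrict : Δ' ⊆ Δ)
    (hrelevant : Γ ∪ Δ ⊆ Γ' ∪ Δ') (hdecls : Γ' ∪ Ω' ∪ Δ' = Γ ∪ Ω ∪ Δ) :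
    Typ Sg Γ' Ω' Δ' M A := by
  induction h generalizing Γ' Ω' Δ' with
  | con hc =>
    rw [Finset.subset_empty.mp hstrict]
    exact .con hc
  | idu hm =>
    rw [Finset.subset_empty.mp hstrict] at hrelevant ⊢
    exact .idu (by simpa using hrelevant (Finset.mem_union_left _ hm))
  | id1 =>
    rcases Finset.subset_singleton_iff.mp hstrict with rfl | rfl
    · exact .idu <|
        by simpa using hrelevant (Finset.mem_union_right _ (Finset.mem_singleton_self _))
    · exact .id1
  | lamu hy _ ih => exact .lamu (by rwa [hdecls]) (ih hstrict (by grind) (by grind))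
  | lam0 hy _ ih => exact .lam0 (by rwa [hdecls]) (ih hstrict (by grind) (by grind))
  | lam1 hy _ ih => exact .lam1 (by rwa [hdecls]) (ih (by grind) (by grind) (by grind))
  | appu _ _ ihM ihN =>
    exact .appu (ihM hstrict hrelevant hdecls) (ihN subset_rfl (by grind) (by grind))
  | app0 _ _ ihM ihN =>
    exact .app0 (ihM hstrict hrelevant hdecls) (ihN subset_rfl (by grind) (by grind))
  | @app1 _ _ ΔM ΔN _ _ _ _ hd _ _ ihM ihN =>
    have hsplit : Δ' ∩ ΔM ∪ Δ' ∩ ΔN = Δ' := by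
      rw [← Finset.inter_union_distrib_left, Finset.inter_eq_left.mpr hstrict]
    rw [← hsplit]
    refine .app1 (hd.mono Finset.inter_subset_right Finset.inter_subset_right)
      (ihM Finset.inter_subset_right ?_ ?_) (ihN Finset.inter_subset_right ?_ ?_)
    -- with the induction hypotheses in context, `grind` drowns in E-matching instances
    all_goals clear ihM ihN; grind

theorem loosening_general (Sg : ℕ → Option Ty) (Γ Ω Δ : Ctx) (M : Tm) (A C : Ty) (x : ℕ) :
    (Typ Sg Γ (insert (x, C) Ω) Δ M A → Typ Sg (insert (x, C) Γ) Ω Δ M A) ∧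
    (Typ Sg Γ Ω (insert (x, C) Δ) M A → Typ Sg (insert (x, C) Γ) Ω Δ M A) :=
  ⟨fun h => h.loosen subset_rfl (by grind) (by grind),
   fun h => h.loosen (Finset.subset_insert _ _) (by grind) (by grind)⟩

/-- **Loosening.**  (1) If `Γ; (Ω, x:C); Δ ⊢ M : A`, then
    `(Γ, x:C); Ω; Δ ⊢ M : A`, and (2) if `Γ; Ω; (Δ, x:C) ⊢ M : A`,
    then `(Γ, x:C); Ω; Δ ⊢ M : A`. -/
theorem loosening (Sg : ℕ → Option Ty) (Γ Ω Δ : Ctx) (M : Tm) (A C : Ty) (x : ℕ)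
    (hx : x ∉ Ctx.names (Γ ∪ Ω ∪ Δ)) :
    (Typ Sg Γ (insert (x, C) Ω) Δ M A → Typ Sg (insert (x, C) Γ) Ω Δ M A) ∧
    (Typ Sg Γ Ω (insert (x, C) Δ) M A → Typ Sg (insert (x, C) Γ) Ω Δ M A) :=
  loosening_general Sg Γ Ω Δ M A C x
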